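/- M♯ is a B-submodule of M[ℏ⁻¹] containing M, the action of ℏ on M♯ is injective, and there is a short exact sequence of B₀-modules 0 → M₀/I·M₀ → M♯/ℏM♯ → I·M₀ → 0, in which the first map is induced by the inclusion M ⊆ M♯ and the second map sends the class of ℏ⁻¹·m (with m̄ ∈ I·M₀) to m̄. (Here I·M₀ is a B₀-submodule of M₀ because I lies in the center of B₀.) -/

import Mathlib

/-!
Everything reduces to two facts about `M[ℏ⁻¹]`: `ℏ` acts invertibly on it, and
`ℏ · (m + ℏ⁻¹ m₁) = ℏ m + m₁` lies in `M`. Hence `m + ℏ⁻¹ m₁ = n + ℏ⁻¹ n₁` exactly when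
`ℏ m + m₁ = ℏ n + n₁` in `M`, which is what makes the reduction `m + ℏ⁻¹ m₁ ↦ m̄₁` well defined
and identifies its kernel. Since `I` is central, `I·M₀` is a `B₀`-submodule, so `M♯` is a
`B`-submodule.
-/

theorem AddSubgroup.smul_mem_closure_smul_of_subset_center {R N : Type*} [Ring R]
    [AddCommGroup N] [Module R N] {I : Set R} (hI : I ⊆ Set.center R) (b : R) {z : N}
    (hz : z ∈ closure {x : N | ∃ i ∈ I, ∃ m : N, x = i • m}) :
    b • z ∈ closure {x : N | ∃ i ∈ I, ∃ m : N, x = i • m} := by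
  induction hz using closure_induction with
  | mem x hx =>
    obtain ⟨i, hi, m, rfl⟩ := hx
    rw [smul_smul, ← ((hI hi).comm b).eq, ← smul_smul]
    exact subset_closure ⟨i, hi, b • m, rfl⟩
  | zero => simp
  | add x y _ _ hx hy => simpa [smul_add] using add_mem hx hy
  | neg x _ hx => simpa [smul_neg] using neg_mem hx

section Sharp

variable {B C M M' : Type*} [Ring B] [Ring C] [AddCommGroup M] [Module B M]
  [AddCommGroup M'] [Module C M']

/-- With `ιM : M → M'` modelling `M ⊆ M[ℏ⁻¹]` and `v = ℏ⁻¹`, this is `M + ℏ⁻¹ N`. -/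
def sharp (ιM : M →+ M') (v : C) (N : AddSubgroup M) : AddSubgroup M' where
  carrier := {x | ∃ m m₁, m₁ ∈ N ∧ x = ιM m + v • ιM m₁}
  zero_mem' := ⟨0, 0, N.zero_mem, by simp⟩
  add_mem' := by
    rintro _ _ ⟨m, m₁, hm₁, rfl⟩ ⟨n, n₁, hn₁, rfl⟩
    exact ⟨m + n, m₁ + n₁, N.add_mem hm₁ hn₁, by simp only [map_add, smul_add]; abel⟩
  neg_mem' := by
    rintro _ ⟨m, m₁, hm₁, rfl⟩
    exact ⟨-m, -m₁, N.neg_mem hm₁, by simp only [map_neg, smul_neg, neg_add]⟩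

variable {ι : B →+* C} {ιM : M →+ M'} {h : B} {v : C} {N : AddSubgroup M}

theorem coe_mem_sharp (m : M) : ιM m ∈ sharp ιM v N :=
  ⟨m, 0, N.zero_mem, by simp⟩

theorem inv_smul_coe_mem_sharp {m : M} (hm : m ∈ N) : v • ιM m ∈ sharp ιM v N :=
  ⟨0, m, hm, by simp⟩

theorem smul_mem_sharp (hιM : ∀ (b : B) (m : M), ιM (b • m) = ι b • ιM m)
    (hv : ∀ c : C, v * c = c * v) (hN : ∀ (b : B), ∀ m ∈ N, b • m ∈ N) (b : B) {x : M'}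
    (hx : x ∈ sharp ιM v N) : ι b • x ∈ sharp ιM v N := by
  obtain ⟨m, m₁, hm₁, rfl⟩ := hx
  refine ⟨b • m, b • m₁, hN b m₁ hm₁, ?_⟩
  rw [smul_add, hιM, hιM, smul_smul, ← hv, ← smul_smul]

theorem smul_add_inv_smul (hιM : ∀ (b : B) (m : M), ιM (b • m) = ι b • ιM m)
    (hv : ι h * v = 1) (m m₁ : M) :
    ι h • (ιM m + v • ιM m₁) = ιM (h • m + m₁) := by
  rw [smul_add, smul_smul, hv, one_smul, ← hιM, map_add]

theorem add_inv_smul_eq_iff (hιM : ∀ (b : B) (m : M), ιM (b • m) = ι b • ιM m)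
    (hιM_inj : Function.Injective ιM) (hv₁ : ι h * v = 1) (hv₂ : v * ι h = 1)
    {m m₁ n n₁ : M} :
    ιM m + v • ιM m₁ = ιM n + v • ιM n₁ ↔ h • m + m₁ = h • n + n₁ := by
  have hunit : IsUnit (ι h) := ⟨⟨ι h, v, hv₁, hv₂⟩, rfl⟩
  rw [← hιM_inj.eq_iff, ← smul_add_inv_smul hιM hv₁, ← smul_add_inv_smul hιM hv₁,
    hunit.smul_left_cancel]

theorem exists_smul_sharp_eq_iff {M₀ : Type*} [AddCommGroup M₀] {p : M →+ M₀}
    {Q : AddSubgroup M₀} (hp : ∀ m, p (h • m) = 0)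
    (hιM : ∀ (b : B) (m : M), ιM (b • m) = ι b • ιM m) (hιM_inj : Function.Injective ιM)
    (hv : ι h * v = 1) {m : M} :
    (∃ s ∈ sharp ιM v (Q.comap p), ιM m = ι h • s) ↔ p m ∈ Q := by
  constructor
  · rintro ⟨_, ⟨b, b₁, hb₁, rfl⟩, hm⟩
    rw [smul_add_inv_smul hιM hv] at hm
    rw [hιM_inj hm, map_add, hp, zero_add]
    exact hb₁
  · intro hm
    exact ⟨v • ιM m, inv_smul_coe_mem_sharp hm, by rw [smul_smul, hv, one_smul]⟩

theorem exists_add_smul_sharp_eq_iff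
    (hιM : ∀ (b : B) (m : M), ιM (b • m) = ι b • ιM m) (hιM_inj : Function.Injective ιM)
    (hv₁ : ι h * v = 1) (hv₂ : v * ι h = 1) {m m₁ : M} :
    (∃ a s, s ∈ sharp ιM v N ∧ ιM m + v • ιM m₁ = ιM a + ι h • s) ↔ ∃ m', m₁ = h • m' := by
  constructor
  · rintro ⟨a, _, ⟨b, b₁, -, rfl⟩, heq⟩
    have heq' : ιM m + v • ιM m₁ = ιM (a + (h • b + b₁)) + v • ιM 0 := by
      rw [heq, smul_add_inv_smul hιM hv₁, map_zero, smul_zero, add_zero, ← map_add]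
    rw [add_inv_smul_eq_iff hιM hιM_inj hv₁ hv₂, add_zero] at heq'
    exact ⟨a + (h • b + b₁) - m, by rw [smul_sub, ← heq']; abel⟩
  · rintro ⟨m', rfl⟩
    refine ⟨m + m', 0, zero_mem _, ?_⟩
    rw [hιM, smul_smul, hv₂, one_smul, smul_zero, add_zero, map_add]

end Sharp

theorem stmt_5_general (B : Type*) [Ring B]
    (hbar : B)
    (B₀ : Type*) [Ring B₀] (π : B →+* B₀)
    (A I : Set B₀)
    (hAcenter : A ⊆ Subring.center B₀)
    (hIA : I ⊆ A)
    (C : Type*) [Ring C] (ι : B →+* C)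
    (v : C) (hv₁ : ι hbar * v = 1)
    (hvcentral : ∀ c : C, v * c = c * v)
    (M : Type*) [AddCommGroup M] [Module B M]
    (M₀ : Type*) [AddCommGroup M₀] [Module B₀ M₀]
    (p : M →+ M₀) (hpsurj : Function.Surjective p)
    (hpact : ∀ (b : B) (m : M), p (b • m) = π b • p m)
    (hpker : ∀ m : M, p m = 0 ↔ ∃ m' : M, m = hbar • m')
    (M' : Type*) [AddCommGroup M'] [Module C M']
    (ιM : M →+ M') (hιMinj : Function.Injective ιM)
    (hιMact : ∀ (b : B) (m : M), ιM (b • m) = ι b • ιM m)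
    (IM0 : AddSubgroup M₀)
    (hIM0 : IM0 = AddSubgroup.closure {x : M₀ | ∃ i ∈ I, ∃ m₀ : M₀, x = i • m₀})
    (S : Set M')
    (hS : S = {x : M' | ∃ m m₁ : M, p m₁ ∈ IM0 ∧ x = ιM m + v • ιM m₁}) :
    -- `I·M₀` is a `B₀`-submodule of `M₀` (since `I` is central)
    ((∀ b₀ : B₀, ∀ z ∈ IM0, b₀ • z ∈ IM0) ∧
     -- `M♯` is a `B`-submodule of `M[ℏ⁻¹]` containing `M`
     (∀ m : M, ιM m ∈ S) ∧
     (∀ x ∈ S, ∀ y ∈ S, x + y ∈ S) ∧ (∀ x ∈ S, -x ∈ S) ∧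
     (∀ b : B, ∀ x ∈ S, ι b • x ∈ S)) ∧
    -- `ℏ` acts injectively on `M♯`
    (∀ x ∈ S, ι hbar • x = 0 → x = 0) ∧
    -- the short exact sequence `0 → M₀/I·M₀ → M♯/ℏM♯ → I·M₀ → 0`
    ((∀ m₁ m₁' m₂ m₂' : M, p m₁' ∈ IM0 → p m₂' ∈ IM0 →
        ιM m₁ + v • ιM m₁' = ιM m₂ + v • ιM m₂' → p m₁' = p m₂') ∧
     (∀ m : M, (∃ s ∈ S, ιM m = ι hbar • s) ↔ p m ∈ IM0) ∧
     (∀ m m₁ : M, p m₁ ∈ IM0 →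
        (p m₁ = 0 ↔ ∃ (a : M) (s : M'), s ∈ S ∧
          ιM m + v • ιM m₁ = ιM a + ι hbar • s)) ∧
     (∀ z ∈ IM0, ∃ m₁ : M, p m₁ ∈ IM0 ∧ p m₁ = z)) := by
  have hv₂ : v * ι hbar = 1 := (hvcentral _).trans hv₁
  have hunit : IsUnit (ι hbar) := ⟨⟨ι hbar, v, hv₁, hv₂⟩, rfl⟩
  have hp : ∀ m, p (hbar • m) = 0 := fun m => (hpker _).2 ⟨m, rfl⟩
  have hIM0_smul : ∀ b₀ : B₀, ∀ z ∈ IM0, b₀ • z ∈ IM0 := by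
    subst hIM0
    exact fun b₀ _ hz =>
      AddSubgroup.smul_mem_closure_smul_of_subset_center (hIA.trans hAcenter) b₀ hz
  have hN : ∀ (b : B), ∀ m ∈ IM0.comap p, b • m ∈ IM0.comap p := fun b m hm => by
    simpa only [AddSubgroup.mem_comap, hpact] using hIM0_smul (π b) _ hm
  obtain rfl : S = sharp ιM v (IM0.comap p) := hS
  refine ⟨⟨hIM0_smul, coe_mem_sharp, fun _ hx _ hy => add_mem hx hy, fun _ hx => neg_mem hx,
    fun b _ hx => smul_mem_sharp hιMact hvcentral hN b hx⟩,
    fun _ _ hx => hunit.smul_eq_zero.1 hx, ?_,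
    fun _ => exists_smul_sharp_eq_iff hp hιMact hιMinj hv₁,
    fun _ m₁ _ => (hpker m₁).trans (exists_add_smul_sharp_eq_iff hιMact hιMinj hv₁ hv₂).symm,
    fun z hz => ?_⟩
  · intro _ _ _ _ _ _ heq
    simpa only [map_add, hp, zero_add] using
      congrArg p ((add_inv_smul_eq_iff hιMact hιMinj hv₁ hv₂).1 heq)
  · obtain ⟨m₁, rfl⟩ := hpsurj z
    exact ⟨m₁, hz, rfl⟩

/-- the modification `M♯ := M + ℏ⁻¹·{m ∈ M : m̄ ∈ I·M₀}` inside
`M[ℏ⁻¹]`.  Here `C` plays the role of `B[ℏ⁻¹]` (with `v = ℏ⁻¹`), `M'` that of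
`M[ℏ⁻¹]`, and `S ⊆ M'` is the image of `M♯`.  Then: `I·M₀` is a `B₀`-submodule
of `M₀`; `S` is a `B`-submodule of `M'` containing `M`; `ℏ` acts injectively on
`S`; and there is a short exact sequence of `B₀`-modules
`0 → M₀/I·M₀ → M♯/ℏM♯ → I·M₀ → 0`, stated elementwise: the assignment
`ιM m + v·ιM m₁ ↦ p m₁` is well defined, the first map (induced by `M ⊆ M♯`) is
injective, the sequence is exact in the middle, and the second map is
surjective onto `I·M₀`. -/
theorem stmt_5 (B : Type*) [Ring B] [Algebra (Polynomial ℂ) B]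
    (htf : ∀ (q : Polynomial ℂ) (b : B), q • b = 0 → q = 0 ∨ b = 0)
    (hbar : B) (hhbar : hbar = algebraMap (Polynomial ℂ) B Polynomial.X)
    (B₀ : Type*) [Ring B₀] [Algebra ℂ B₀] (π : B →+* B₀)
    (hsurj : Function.Surjective π)
    (hker : ∀ b : B, π b = 0 ↔ ∃ a : B, b = hbar * a)
    (A I : Set B₀)
    (hAcenter : A ⊆ Subring.center B₀) (h1A : (1 : B₀) ∈ A)
    (hAadd : ∀ x ∈ A, ∀ y ∈ A, x + y ∈ A) (hAmul : ∀ x ∈ A, ∀ y ∈ A, x * y ∈ A)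
    (hAsmul : ∀ (a : ℂ), ∀ x ∈ A, a • x ∈ A)
    (hIA : I ⊆ A) (h0I : (0 : B₀) ∈ I)
    (hIadd : ∀ x ∈ I, ∀ y ∈ I, x + y ∈ I) (hIneg : ∀ x ∈ I, -x ∈ I)
    (hImul : ∀ a ∈ A, ∀ x ∈ I, a * x ∈ I)
    (C : Type*) [Ring C] (ι : B →+* C) (hιinj : Function.Injective ι)
    (v : C) (hv₁ : ι hbar * v = 1) (hv₂ : v * ι hbar = 1)
    (hvcentral : ∀ c : C, v * c = c * v)
    (hCgen : ∀ c : C, ∃ (b : B) (k : ℕ), c = v ^ k * ι b)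
    (M : Type*) [AddCommGroup M] [Module B M]
    (htfM : ∀ m : M, hbar • m = 0 → m = 0)
    (M₀ : Type*) [AddCommGroup M₀] [Module B₀ M₀]
    (p : M →+ M₀) (hpsurj : Function.Surjective p)
    (hpact : ∀ (b : B) (m : M), p (b • m) = π b • p m)
    (hpker : ∀ m : M, p m = 0 ↔ ∃ m' : M, m = hbar • m')
    (M' : Type*) [AddCommGroup M'] [Module C M']
    (ιM : M →+ M') (hιMinj : Function.Injective ιM)
    (hιMact : ∀ (b : B) (m : M), ιM (b • m) = ι b • ιM m)
    (hMgen : ∀ x : M', ∃ (m : M) (k : ℕ), x = v ^ k • ιM m)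
    (IM0 : AddSubgroup M₀)
    (hIM0 : IM0 = AddSubgroup.closure {x : M₀ | ∃ i ∈ I, ∃ m₀ : M₀, x = i • m₀})
    (S : Set M')
    (hS : S = {x : M' | ∃ m m₁ : M, p m₁ ∈ IM0 ∧ x = ιM m + v • ιM m₁}) :
    -- `I·M₀` is a `B₀`-submodule of `M₀` (since `I` is central)
    ((∀ b₀ : B₀, ∀ z ∈ IM0, b₀ • z ∈ IM0) ∧
     -- `M♯` is a `B`-submodule of `M[ℏ⁻¹]` containing `M`
     (∀ m : M, ιM m ∈ S) ∧
     (∀ x ∈ S, ∀ y ∈ S, x + y ∈ S) ∧ (∀ x ∈ S, -x ∈ S) ∧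
     (∀ b : B, ∀ x ∈ S, ι b • x ∈ S)) ∧
    -- `ℏ` acts injectively on `M♯`
    (∀ x ∈ S, ι hbar • x = 0 → x = 0) ∧
    -- the short exact sequence `0 → M₀/I·M₀ → M♯/ℏM♯ → I·M₀ → 0`
    ((∀ m₁ m₁' m₂ m₂' : M, p m₁' ∈ IM0 → p m₂' ∈ IM0 →
        ιM m₁ + v • ιM m₁' = ιM m₂ + v • ιM m₂' → p m₁' = p m₂') ∧
     (∀ m : M, (∃ s ∈ S, ιM m = ι hbar • s) ↔ p m ∈ IM0) ∧
     (∀ m m₁ : M, p m₁ ∈ IM0 →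
        (p m₁ = 0 ↔ ∃ (a : M) (s : M'), s ∈ S ∧
          ιM m + v • ιM m₁ = ιM a + ι hbar • s)) ∧
     (∀ z ∈ IM0, ∃ m₁ : M, p m₁ ∈ IM0 ∧ p m₁ = z)) :=
  stmt_5_general B hbar B₀ π A I hAcenter hIA C ι v hv₁ hvcentral M M₀ p hpsurj hpact hpker M' ιM
    hιMinj hιMact IM0 hIM0 S hS
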